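/- (Marginals, Case 2.) Suppose θ₁+θ₂ = θ₁′ and θ₁+θ₂ ≠ θ₂′. Then for every y₁ ∈ (a,b), the marginal CDF F_{Y₁}(y₁) = ∫_a^{y₁} ∫_a^b f(u,v) dv du equals F₀(y₁)^{θ₁+θ₂}·[1 − θ₂ ln(F₀(y₁))], and for every y₂ ∈ (a,b), the marginal CDF F_{Y₂}(y₂) = ∫_a^b ∫_a^{y₂} f(u,v) dv du equals (θ₁/(θ₁+θ₂−θ₂′))·F₀(y₂)^{θ₂′} + ((θ₂−θ₂′)/(θ₁+θ₂−θ₂′))·F₀(y₂)^{θ₁+θ₂}. -/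

import Mathlib

/-!
In case 2 the density on `u < v` is `(θ₁+θ₂) θ₂ f₀(u) F₀(u)^(θ₁+θ₂-1) · f₀(v) / F₀(v)`, and on
`v < u` it is a product of powers of `F₀` times `f₀(u) f₀(v)`. Every inner and outer integral is
therefore evaluated by the fundamental theorem of calculus with an antiderivative built from powers
of `F₀` and `log F₀`; the endpoints `a` and `b` are reached as limits (`F₀ → 0`, `F₀ → 1`,
`F₀^p log F₀ → 0`), and integrability is automatic because all these derivatives are nonnegative.

Both marginals come from the joint CDF on `y₁ ≤ y₂`, namely
`F₀(y₁)^(θ₁+θ₂) (1 + θ₂ (log F₀(y₂) - log F₀(y₁)))`: at `y₂ = b` it is the first marginal, and at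
`y₁ = y₂ = y` it is the part of the second marginal with `u ≤ y`, the rest being
`∫_y^b θ₁ f₀(u) F₀(u)^(θ₁+θ₂-θ₂'-1) F₀(y)^θ₂' du`.
-/

open MeasureTheory Set

noncomputable def dprh (a b : ℝ) (F₀ f₀ : ℝ → ℝ) (θ₁ θ₂ θ₁' θ₂' : ℝ) (y₁ y₂ : ℝ) : ℝ :=
  if a < y₁ ∧ y₁ < y₂ ∧ y₂ < b then
    θ₁' * θ₂ * f₀ y₁ * f₀ y₂ * F₀ y₁ ^ (θ₁' - 1) * F₀ y₂ ^ (θ₁ + θ₂ - θ₁' - 1)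
  else if a < y₂ ∧ y₂ < y₁ ∧ y₁ < b then
    θ₁ * θ₂' * f₀ y₁ * f₀ y₂ * F₀ y₁ ^ (θ₁ + θ₂ - θ₂' - 1) * F₀ y₂ ^ (θ₂' - 1)
  else 0

open Filter Topology Real

section Density

variable {a b u v : ℝ} {F₀ f₀ : ℝ → ℝ} {θ₁ θ₂ θ₁' θ₂' : ℝ}

theorem dprh_of_lt (hau : a < u) (huv : u < v) (hvb : v < b) :
    dprh a b F₀ f₀ θ₁ θ₂ θ₁' θ₂' u v =
      θ₁' * θ₂ * f₀ u * f₀ v * F₀ u ^ (θ₁' - 1) * F₀ v ^ (θ₁ + θ₂ - θ₁' - 1) :=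
  if_pos ⟨hau, huv, hvb⟩

theorem dprh_of_gt (hav : a < v) (hvu : v < u) (hub : u < b) :
    dprh a b F₀ f₀ θ₁ θ₂ θ₁' θ₂' u v =
      θ₁ * θ₂' * f₀ u * f₀ v * F₀ u ^ (θ₁ + θ₂ - θ₂' - 1) * F₀ v ^ (θ₂' - 1) := by
  rw [dprh, if_neg fun h => h.2.1.not_gt hvu, if_pos ⟨hav, hvu, hub⟩]

end Density

theorem intervalIntegrable_and_integral_eq_sub_of_tendsto {f g g' : ℝ → ℝ} {a b ga gb : ℝ}
    (hab : a < b) (hderiv : ∀ x ∈ Ioo a b, HasDerivAt g (g' x) x)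
    (hnonneg : ∀ x ∈ Ioo a b, 0 ≤ g' x) (ha : Tendsto g (𝓝[>] a) (𝓝 ga))
    (hb : Tendsto g (𝓝[<] b) (𝓝 gb)) (hfg : EqOn f g' (Ioo a b)) :
    IntervalIntegrable f volume a b ∧ ∫ x in a..b, f x = gb - ga := by
  have hcont : ContinuousOn g (Ioo a b) := fun x hx =>
    (hderiv x hx).continuousAt.continuousWithinAt
  have hint : IntervalIntegrable g' volume a b := by
    refine (intervalIntegrable_iff_integrableOn_Ioc_of_le hab.le).2 <|
      intervalIntegral.integrableOn_deriv_of_nonneg (continuousOn_Icc_extendFrom_Ioo hcont ha hb)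
        (fun x hx => ?_) hnonneg
    refine (hderiv x hx).congr_of_eventuallyEq ?_
    filter_upwards [Ioo_mem_nhds hx.1 hx.2] with y hy using extendFrom_extends hcont y hy
  rw [← uIoo_of_le hab.le] at hfg
  refine ⟨(intervalIntegrable_congr_uIoo hfg).2 hint, ?_⟩
  rw [intervalIntegral.integral_congr_uIoo hfg]
  exact intervalIntegral.integral_eq_sub_of_hasDerivAt_of_tendsto hab hderiv hint ha hb

structure IsBaselineCDF (a b : ℝ) (F₀ f₀ : ℝ → ℝ) : Prop where
  hasDerivAt : ∀ y ∈ Ioo a b, HasDerivAt F₀ (f₀ y) y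
  strictMonoOn : StrictMonoOn F₀ (Ioo a b)
  density_pos : ∀ y ∈ Ioo a b, 0 < f₀ y
  pos : ∀ y ∈ Ioo a b, 0 < F₀ y
  lt_one : ∀ y ∈ Ioo a b, F₀ y < 1
  tendsto_left : Tendsto F₀ (𝓝[>] a) (𝓝 0)
  tendsto_right : Tendsto F₀ (𝓝[<] b) (𝓝 1)

namespace IsBaselineCDF

variable {a b : ℝ} {F₀ f₀ : ℝ → ℝ}

theorem hasDerivAt_rpow (hF : IsBaselineCDF a b F₀ f₀) (p : ℝ) {y : ℝ} (hy : y ∈ Ioo a b) :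
    HasDerivAt (fun x => F₀ x ^ p) (f₀ y * p * F₀ y ^ (p - 1)) y :=
  (hF.hasDerivAt y hy).rpow_const (Or.inl (hF.pos y hy).ne')

theorem hasDerivAt_log (hF : IsBaselineCDF a b F₀ f₀) {y : ℝ} (hy : y ∈ Ioo a b) :
    HasDerivAt (fun x => log (F₀ x)) (f₀ y / F₀ y) y :=
  (hF.hasDerivAt y hy).log (hF.pos y hy).ne'

theorem log_nonpos (hF : IsBaselineCDF a b F₀ f₀) {y : ℝ} (hy : y ∈ Ioo a b) : log (F₀ y) ≤ 0 :=
  Real.log_nonpos (hF.pos y hy).le (hF.lt_one y hy).le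

theorem tendsto_nhdsGT_zero (hF : IsBaselineCDF a b F₀ f₀) (hab : a < b) :
    Tendsto F₀ (𝓝[>] a) (𝓝[>] 0) :=
  tendsto_nhdsWithin_iff.2 ⟨hF.tendsto_left,
    eventually_of_mem (Ioo_mem_nhdsGT hab) hF.pos⟩

theorem tendsto_rpow_left (hF : IsBaselineCDF a b F₀ f₀) {p : ℝ} (hp : 0 < p) :
    Tendsto (fun y => F₀ y ^ p) (𝓝[>] a) (𝓝 0) := by
  simpa [Real.zero_rpow hp.ne'] using hF.tendsto_left.rpow_const (Or.inr hp.le)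

theorem tendsto_log_mul_rpow_left (hF : IsBaselineCDF a b F₀ f₀) (hab : a < b) {p : ℝ}
    (hp : 0 < p) : Tendsto (fun y => log (F₀ y) * F₀ y ^ p) (𝓝[>] a) (𝓝 0) :=
  (tendsto_log_mul_rpow_nhdsGT_zero hp).comp (hF.tendsto_nhdsGT_zero hab)

theorem tendsto_rpow_right (hF : IsBaselineCDF a b F₀ f₀) (p : ℝ) :
    Tendsto (fun y => F₀ y ^ p) (𝓝[<] b) (𝓝 1) := by
  simpa using hF.tendsto_right.rpow_const (Or.inl one_ne_zero)

theorem tendsto_log_right (hF : IsBaselineCDF a b F₀ f₀) :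
    Tendsto (fun y => log (F₀ y)) (𝓝[<] b) (𝓝 0) := by
  simpa using hF.tendsto_right.log one_ne_zero


variable {θ₁ θ₂ θ₁' θ₂' : ℝ}

theorem integral_dprh_below (hF : IsBaselineCDF a b F₀ f₀) (hθ₁ : 0 < θ₁) (hθ₂' : 0 < θ₂')
    {u c : ℝ} (hac : a < c) (hcu : c ≤ u) (hub : u < b) :
    IntervalIntegrable (dprh a b F₀ f₀ θ₁ θ₂ θ₁' θ₂' u) volume a c ∧
      ∫ v in a..c, dprh a b F₀ f₀ θ₁ θ₂ θ₁' θ₂' u v =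
        θ₁ * f₀ u * F₀ u ^ (θ₁ + θ₂ - θ₂' - 1) * F₀ c ^ θ₂' := by
  have hu : u ∈ Ioo a b := ⟨hac.trans_le hcu, hub⟩
  have hsub : Ioo a c ⊆ Ioo a b := Ioo_subset_Ioo_right (hcu.trans hub.le)
  have := hF.density_pos u hu
  have := hF.pos u hu
  have hderiv : ∀ v ∈ Ioo a b, HasDerivAt
      (fun v => θ₁ * f₀ u * F₀ u ^ (θ₁ + θ₂ - θ₂' - 1) * F₀ v ^ θ₂')
      (θ₁ * f₀ u * F₀ u ^ (θ₁ + θ₂ - θ₂' - 1) * (f₀ v * θ₂' * F₀ v ^ (θ₂' - 1))) v :=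
    fun v hv => (hF.hasDerivAt_rpow θ₂' hv).const_mul _
  obtain ⟨hint, heq⟩ := intervalIntegrable_and_integral_eq_sub_of_tendsto
    (f := dprh a b F₀ f₀ θ₁ θ₂ θ₁' θ₂' u) hac
    (fun v hv => hderiv v (hsub hv))
    (fun v hv => by have := hF.density_pos v (hsub hv); have := hF.pos v (hsub hv); positivity)
    (by simpa using (hF.tendsto_rpow_left hθ₂').const_mul _)
    (hderiv c ⟨hac, hcu.trans_lt hub⟩).continuousAt.continuousWithinAt
    (fun v hv => by rw [dprh_of_gt hv.1 (hv.2.trans_le hcu) hub]; ring)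
  exact ⟨hint, by rw [heq, sub_zero]⟩

theorem integral_dprh_above (hF : IsBaselineCDF a b F₀ f₀) (hθ₁ : 0 < θ₁) (hθ₂ : 0 < θ₂)
    {u c ℓ : ℝ} (hau : a < u) (huc : u < c) (hcb : c ≤ b)
    (hℓ : Tendsto (fun v => log (F₀ v)) (𝓝[<] c) (𝓝 ℓ)) :
    IntervalIntegrable (dprh a b F₀ f₀ θ₁ θ₂ (θ₁ + θ₂) θ₂' u) volume u c ∧
      ∫ v in u..c, dprh a b F₀ f₀ θ₁ θ₂ (θ₁ + θ₂) θ₂' u v =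
        (θ₁ + θ₂) * θ₂ * f₀ u * F₀ u ^ (θ₁ + θ₂ - 1) * (ℓ - log (F₀ u)) := by
  have hu : u ∈ Ioo a b := ⟨hau, huc.trans_le hcb⟩
  have hsub : Ioo u c ⊆ Ioo a b := Ioo_subset_Ioo hau.le hcb
  have := hF.density_pos u hu
  have := hF.pos u hu
  have hderiv : ∀ v ∈ Ioo a b, HasDerivAt
      (fun v => (θ₁ + θ₂) * θ₂ * f₀ u * F₀ u ^ (θ₁ + θ₂ - 1) * log (F₀ v))
      ((θ₁ + θ₂) * θ₂ * f₀ u * F₀ u ^ (θ₁ + θ₂ - 1) * (f₀ v / F₀ v)) v :=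
    fun v hv => (hF.hasDerivAt_log hv).const_mul _
  obtain ⟨hint, heq⟩ := intervalIntegrable_and_integral_eq_sub_of_tendsto
    (f := dprh a b F₀ f₀ θ₁ θ₂ (θ₁ + θ₂) θ₂' u) huc
    (fun v hv => hderiv v (hsub hv))
    (fun v hv => by have := hF.density_pos v (hsub hv); have := hF.pos v (hsub hv); positivity)
    (hderiv u hu).continuousAt.continuousWithinAt (hℓ.const_mul _)
    (fun v hv => by
      rw [dprh_of_lt hau hv.1 (hv.2.trans_le hcb), show θ₁ + θ₂ - (θ₁ + θ₂) - 1 = (-1 : ℝ) by ring,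
        rpow_neg_one]
      ring)
  exact ⟨hint, by rw [heq, mul_sub]⟩

theorem integral_dprh_of_lt (hF : IsBaselineCDF a b F₀ f₀) (hθ₁ : 0 < θ₁) (hθ₂ : 0 < θ₂)
    (hθ₂' : 0 < θ₂') {u c ℓ : ℝ} (hau : a < u) (huc : u < c) (hcb : c ≤ b)
    (hℓ : Tendsto (fun v => log (F₀ v)) (𝓝[<] c) (𝓝 ℓ)) :
    ∫ v in a..c, dprh a b F₀ f₀ θ₁ θ₂ (θ₁ + θ₂) θ₂' u v =
      f₀ u * F₀ u ^ (θ₁ + θ₂ - 1) * (θ₁ + (θ₁ + θ₂) * θ₂ * (ℓ - log (F₀ u))) := by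
  obtain ⟨hint₁, h₁⟩ := hF.integral_dprh_below (θ₁' := θ₁ + θ₂) hθ₁ hθ₂' hau le_rfl
    (huc.trans_le hcb)
  obtain ⟨hint₂, h₂⟩ := hF.integral_dprh_above hθ₁ hθ₂ hau huc hcb hℓ
  have hpow : F₀ u ^ (θ₁ + θ₂ - θ₂' - 1) * F₀ u ^ θ₂' = F₀ u ^ (θ₁ + θ₂ - 1) := by
    rw [← rpow_add (hF.pos u ⟨hau, huc.trans_le hcb⟩)]
    ring_nf
  rw [← intervalIntegral.integral_add_adjacent_intervals hint₁ hint₂, h₁, h₂]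
  linear_combination θ₁ * f₀ u * hpow

/-- For `y ≤ c` this is the joint CDF at `(y, c)`; `ℓ` stands for `log (F₀ c)`, so that `c = b`
(where `log F₀ → 0`) is covered as well. -/
theorem integral_integral_dprh_of_le (hF : IsBaselineCDF a b F₀ f₀) (hθ₁ : 0 < θ₁)
    (hθ₂ : 0 < θ₂) (hθ₂' : 0 < θ₂') {y c ℓ : ℝ} (hy : y ∈ Ioo a b) (hyc : y ≤ c) (hcb : c ≤ b)
    (hℓ : Tendsto (fun v => log (F₀ v)) (𝓝[<] c) (𝓝 ℓ))
    (hlog_le : ∀ u ∈ Ioo a c, log (F₀ u) ≤ ℓ) :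
    IntervalIntegrable (fun u => ∫ v in a..c, dprh a b F₀ f₀ θ₁ θ₂ (θ₁ + θ₂) θ₂' u v)
        volume a y ∧
      ∫ u in a..y, ∫ v in a..c, dprh a b F₀ f₀ θ₁ θ₂ (θ₁ + θ₂) θ₂' u v =
        F₀ y ^ (θ₁ + θ₂) * (1 + θ₂ * (ℓ - log (F₀ y))) := by
  have hsub : Ioo a y ⊆ Ioo a b := Ioo_subset_Ioo_right hy.2.le
  have hs : 0 < θ₁ + θ₂ := add_pos hθ₁ hθ₂
  have hderiv : ∀ u ∈ Ioo a b, HasDerivAt (fun u => F₀ u ^ (θ₁ + θ₂) * (1 + θ₂ * (ℓ - log (F₀ u))))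
      (f₀ u * F₀ u ^ (θ₁ + θ₂ - 1) * (θ₁ + (θ₁ + θ₂) * θ₂ * (ℓ - log (F₀ u)))) u := by
    intro u hu
    refine ((hF.hasDerivAt_rpow _ hu).mul
      ((((hF.hasDerivAt_log hu).const_sub ℓ).const_mul θ₂).const_add 1)).congr_deriv ?_
    rw [rpow_sub (hF.pos u hu), rpow_one]
    field_simp
    ring
  have hleft : Tendsto (fun u => F₀ u ^ (θ₁ + θ₂) * (1 + θ₂ * (ℓ - log (F₀ u)))) (𝓝[>] a)
      (𝓝 0) := by
    have := ((hF.tendsto_rpow_left hs).const_mul (1 + θ₂ * ℓ)).sub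
      ((hF.tendsto_log_mul_rpow_left (hy.1.trans hy.2) hs).const_mul θ₂)
    simp only [mul_zero, sub_zero] at this
    exact this.congr fun u => by ring
  obtain ⟨hint, heq⟩ := intervalIntegrable_and_integral_eq_sub_of_tendsto
    (f := fun u => ∫ v in a..c, dprh a b F₀ f₀ θ₁ θ₂ (θ₁ + θ₂) θ₂' u v) hy.1
    (fun u hu => hderiv u (hsub hu))
    (fun u hu => by
      have := hF.density_pos u (hsub hu)
      have := hF.pos u (hsub hu)
      have := sub_nonneg.2 (hlog_le u ⟨hu.1, hu.2.trans_le hyc⟩)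
      positivity)
    hleft (hderiv y hy).continuousAt.continuousWithinAt
    (fun u hu => hF.integral_dprh_of_lt hθ₁ hθ₂ hθ₂' hu.1 (hu.2.trans_le hyc) hcb hℓ)
  exact ⟨hint, by rw [heq, sub_zero]⟩

theorem integral_integral_dprh_of_ge (hF : IsBaselineCDF a b F₀ f₀) (hθ₁ : 0 < θ₁)
    (hθ₂' : 0 < θ₂') (hd : θ₁ + θ₂ - θ₂' ≠ 0) {y : ℝ} (hy : y ∈ Ioo a b) :
    IntervalIntegrable (fun u => ∫ v in a..y, dprh a b F₀ f₀ θ₁ θ₂ θ₁' θ₂' u v) volume y b ∧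
      ∫ u in y..b, ∫ v in a..y, dprh a b F₀ f₀ θ₁ θ₂ θ₁' θ₂' u v =
        θ₁ / (θ₁ + θ₂ - θ₂') * F₀ y ^ θ₂' * (1 - F₀ y ^ (θ₁ + θ₂ - θ₂')) := by
  have hsub : Ioo y b ⊆ Ioo a b := Ioo_subset_Ioo_left hy.1.le
  have hderiv : ∀ u ∈ Ioo a b,
      HasDerivAt (fun u => θ₁ / (θ₁ + θ₂ - θ₂') * F₀ y ^ θ₂' * F₀ u ^ (θ₁ + θ₂ - θ₂'))
        (θ₁ * f₀ u * F₀ u ^ (θ₁ + θ₂ - θ₂' - 1) * F₀ y ^ θ₂') u := by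
    intro u hu
    refine ((hF.hasDerivAt_rpow _ hu).const_mul _).congr_deriv ?_
    field_simp
  obtain ⟨hint, heq⟩ := intervalIntegrable_and_integral_eq_sub_of_tendsto
    (f := fun u => ∫ v in a..y, dprh a b F₀ f₀ θ₁ θ₂ θ₁' θ₂' u v) hy.2
    (fun u hu => hderiv u (hsub hu))
    (fun u hu => by
      have := hF.density_pos u (hsub hu)
      have := hF.pos u (hsub hu)
      have := hF.pos y hy
      positivity)
    (hderiv y hy).continuousAt.continuousWithinAt
    (by simpa using (hF.tendsto_rpow_right _).const_mul (θ₁ / (θ₁ + θ₂ - θ₂') * F₀ y ^ θ₂'))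
    (fun u hu => (hF.integral_dprh_below hθ₁ hθ₂' hy.1 hu.1.le hu.2).2)
  exact ⟨hint, by rw [heq]; ring⟩

theorem integral_integral_dprh_fst (hF : IsBaselineCDF a b F₀ f₀) (hθ₁ : 0 < θ₁)
    (hθ₂ : 0 < θ₂) (hθ₂' : 0 < θ₂') {y : ℝ} (hy : y ∈ Ioo a b) :
    ∫ u in a..y, ∫ v in a..b, dprh a b F₀ f₀ θ₁ θ₂ (θ₁ + θ₂) θ₂' u v =
      F₀ y ^ (θ₁ + θ₂) * (1 - θ₂ * log (F₀ y)) := by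
  rw [(hF.integral_integral_dprh_of_le hθ₁ hθ₂ hθ₂' hy hy.2.le le_rfl hF.tendsto_log_right
    fun u hu => hF.log_nonpos hu).2]
  ring

theorem integral_integral_dprh_snd (hF : IsBaselineCDF a b F₀ f₀) (hθ₁ : 0 < θ₁)
    (hθ₂ : 0 < θ₂) (hθ₂' : 0 < θ₂') (hd : θ₁ + θ₂ - θ₂' ≠ 0) {y : ℝ} (hy : y ∈ Ioo a b) :
    ∫ u in a..b, ∫ v in a..y, dprh a b F₀ f₀ θ₁ θ₂ (θ₁ + θ₂) θ₂' u v =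
      θ₁ / (θ₁ + θ₂ - θ₂') * F₀ y ^ θ₂' + (θ₂ - θ₂') / (θ₁ + θ₂ - θ₂') * F₀ y ^ (θ₁ + θ₂) := by
  obtain ⟨hint₁, h₁⟩ := hF.integral_integral_dprh_of_le hθ₁ hθ₂ hθ₂' hy le_rfl hy.2.le
    (hF.hasDerivAt_log hy).continuousAt.continuousWithinAt fun u hu =>
      log_le_log (hF.pos u ⟨hu.1, hu.2.trans hy.2⟩)
        (hF.strictMonoOn ⟨hu.1, hu.2.trans hy.2⟩ hy hu.2).le
  obtain ⟨hint₂, h₂⟩ := hF.integral_integral_dprh_of_ge hθ₁ hθ₂' hd hy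
  have hpow : F₀ y ^ θ₂' * F₀ y ^ (θ₁ + θ₂ - θ₂') = F₀ y ^ (θ₁ + θ₂) := by
    rw [← rpow_add (hF.pos y hy)]
    ring_nf
  rw [← intervalIntegral.integral_add_adjacent_intervals hint₁ hint₂, h₁, h₂]
  field_simp
  linear_combination (-θ₁) * hpow

end IsBaselineCDF

theorem dprh_marginals_case2_general
    (a b : ℝ) (F₀ f₀ : ℝ → ℝ)
    (hderiv : ∀ y ∈ Ioo a b, HasDerivAt F₀ (f₀ y) y)
    (hmono : StrictMonoOn F₀ (Ioo a b))
    (hf₀pos : ∀ y ∈ Ioo a b, 0 < f₀ y)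
    (hF₀pos : ∀ y ∈ Ioo a b, 0 < F₀ y)
    (hF₀lt1 : ∀ y ∈ Ioo a b, F₀ y < 1)
    (hFa : Filter.Tendsto F₀ (nhdsWithin a (Ioi a)) (nhds 0))
    (hFb : Filter.Tendsto F₀ (nhdsWithin b (Iio b)) (nhds 1))
    (θ₁ θ₂ θ₁' θ₂' : ℝ) (hθ₁ : 0 < θ₁) (hθ₂ : 0 < θ₂) (hθ₂' : 0 < θ₂')
    (heq₁ : θ₁ + θ₂ = θ₁') (hne₂ : θ₁ + θ₂ ≠ θ₂')
    :
    (∀ y₁ ∈ Ioo a b,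
      (∫ u in a..y₁, ∫ v in a..b, dprh a b F₀ f₀ θ₁ θ₂ θ₁' θ₂' u v) =
        F₀ y₁ ^ (θ₁ + θ₂) * (1 - θ₂ * Real.log (F₀ y₁))) ∧
    (∀ y₂ ∈ Ioo a b,
      (∫ u in a..b, ∫ v in a..y₂, dprh a b F₀ f₀ θ₁ θ₂ θ₁' θ₂' u v) =
        θ₁ / (θ₁ + θ₂ - θ₂') * F₀ y₂ ^ θ₂' +
          (θ₂ - θ₂') / (θ₁ + θ₂ - θ₂') * F₀ y₂ ^ (θ₁ + θ₂)) := by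
  subst heq₁
  have hF : IsBaselineCDF a b F₀ f₀ := ⟨hderiv, hmono, hf₀pos, hF₀pos, hF₀lt1, hFa, hFb⟩
  exact ⟨fun y₁ hy₁ => hF.integral_integral_dprh_fst hθ₁ hθ₂ hθ₂' hy₁,
    fun y₂ hy₂ => hF.integral_integral_dprh_snd hθ₁ hθ₂ hθ₂' (sub_ne_zero.2 hne₂) hy₂⟩

theorem dprh_marginals_case2
    (a b : ℝ) (hab : a < b) (F₀ f₀ : ℝ → ℝ)
    (hderiv : ∀ y ∈ Ioo a b, HasDerivAt F₀ (f₀ y) y)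
    (hf₀cont : ContinuousOn f₀ (Ioo a b))
    (hmono : StrictMonoOn F₀ (Ioo a b))
    (hf₀pos : ∀ y ∈ Ioo a b, 0 < f₀ y)
    (hF₀pos : ∀ y ∈ Ioo a b, 0 < F₀ y)
    (hF₀lt1 : ∀ y ∈ Ioo a b, F₀ y < 1)
    (hFa : Filter.Tendsto F₀ (nhdsWithin a (Ioi a)) (nhds 0))
    (hFb : Filter.Tendsto F₀ (nhdsWithin b (Iio b)) (nhds 1))
    (θ₁ θ₂ θ₁' θ₂' : ℝ) (hθ₁ : 0 < θ₁) (hθ₂ : 0 < θ₂) (hθ₁' : 0 < θ₁') (hθ₂' : 0 < θ₂')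
    (heq₁ : θ₁ + θ₂ = θ₁') (hne₂ : θ₁ + θ₂ ≠ θ₂')
    :
    (∀ y₁ ∈ Ioo a b,
      (∫ u in a..y₁, ∫ v in a..b, dprh a b F₀ f₀ θ₁ θ₂ θ₁' θ₂' u v) =
        F₀ y₁ ^ (θ₁ + θ₂) * (1 - θ₂ * Real.log (F₀ y₁))) ∧
    (∀ y₂ ∈ Ioo a b,
      (∫ u in a..b, ∫ v in a..y₂, dprh a b F₀ f₀ θ₁ θ₂ θ₁' θ₂' u v) =
        θ₁ / (θ₁ + θ₂ - θ₂') * F₀ y₂ ^ θ₂' +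
          (θ₂ - θ₂') / (θ₁ + θ₂ - θ₂') * F₀ y₂ ^ (θ₁ + θ₂)) :=
  dprh_marginals_case2_general a b F₀ f₀ hderiv hmono hf₀pos hF₀pos hF₀lt1 hFa hFb θ₁ θ₂ θ₁' θ₂' hθ₁
    hθ₂ hθ₂' heq₁ hne₂
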